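/- arXiv:math/0002062 — 5 statements merged into one kernel-verified Lean document; each statement's English description precedes it below -/
import Mathlib

section
/- Let G be a directed graph, let P be a directed path from vertex x to vertex y, and let Q be a directed path from y to x. Then there exist directed cycles C_1, ..., C_k such that the mod-2 sum of C_1, ..., C_k equals the symmetric difference of (the edge sets of) P and Q, and the union of the C_i equals the union of P and Q. -/
open scoped Classical

variable {V : Type*}

/-- `E` is the edge set of a directed path from `x` to `y` in the digraph `R`. -/
def IsDiPathSet (R : V → V → Prop) (x y : V) (E : Finset (V × V)) : Prop :=
  ∃ l : List V, l.Nodup ∧ l.Chain' R ∧ l.head? = some x ∧ l.getLast? = some y ∧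
    E = (l.zip l.tail).toFinset

/-- `E` is the edge set of a directed cycle in the digraph `R`. -/
def IsDiCycleSet (R : V → V → Prop) (E : Finset (V × V)) : Prop :=
  ∃ l : List V, l ≠ [] ∧ l.Nodup ∧ (∀ p ∈ l.zip (l.rotate 1), R p.1 p.2) ∧
    E = (l.zip (l.rotate 1)).toFinset


/-!
Concatenating the two paths gives a closed walk `x → y → x` that traverses every edge of
`P ∩ Q` twice and every other edge of `P ∪ Q` once. Splitting a closed walk at a repeated
vertex gives two shorter closed walks that together traverse the same edges, so every closed
walk splits into directed cycles whose edge lists together form a permutation of the walk's.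
The number of these cycles through an edge `e` is then `[e ∈ P] + [e ∈ Q]`, which is odd exactly
on the symmetric difference and positive exactly on the union.
-/

def cycleEdges (c : List V) : List (V × V) := c.zip (c.rotate 1)

def IsDiCycle (R : V → V → Prop) (c : List V) : Prop :=
  c ≠ [] ∧ c.Nodup ∧ ∀ e ∈ cycleEdges c, R e.1 e.2

theorem IsDiCycle.isDiCycleSet {R : V → V → Prop} {c : List V} (h : IsDiCycle R c) :
    IsDiCycleSet R (cycleEdges c).toFinset :=
  ⟨c, h.1, h.2.1, h.2.2, rfl⟩

namespace List

theorem Nodup.cycleEdges {c : List V} (h : c.Nodup) : (_root_.cycleEdges c).Nodup :=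
  .of_map Prod.fst <| by rwa [_root_.cycleEdges, map_fst_zip (by simp)]

@[simp]
theorem consecutivePairs_singleton (a : V) : [a].consecutivePairs = [] := rfl

@[simp]
theorem consecutivePairs_cons_cons (a b : V) (l : List V) :
    (a :: b :: l).consecutivePairs = (a, b) :: (b :: l).consecutivePairs := rfl

theorem map_fst_consecutivePairs (l : List V) : l.consecutivePairs.map Prod.fst = l.dropLast := by
  rw [consecutivePairs, zip_eq_zip_take_min, map_fst_zip (by simp)]
  simp [dropLast_eq_take]

theorem Nodup.consecutivePairs {l : List V} (h : l.Nodup) : l.consecutivePairs.Nodup :=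
  .of_map Prod.fst <| by
    rw [map_fst_consecutivePairs]
    exact h.sublist (dropLast_sublist l)

theorem consecutivePairs_append_cons (l₁ l₂ : List V) (u : V) :
    (l₁ ++ u :: l₂).consecutivePairs =
      (l₁ ++ [u]).consecutivePairs ++ (u :: l₂).consecutivePairs := by
  induction l₁ with
  | nil => simp
  | cons a l₁ ih => cases l₁ <;> simp_all

theorem consecutivePairs_cons_append_singleton (v : V) (l : List V) :
    (v :: l ++ [v]).consecutivePairs = cycleEdges (v :: l) := by
  rw [_root_.cycleEdges, rotate_cons_succ, rotate_zero]
  show (v :: l ++ [v]).zip (l ++ [v]) = (v :: l).zip (l ++ [v])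
  simpa using zip_append (l₁ := v :: l) (r₁ := [v]) (l₂ := l ++ [v]) (r₂ := []) (by simp)

theorem IsChain.rel_of_mem_consecutivePairs {R : V → V → Prop} {l : List V} (h : l.IsChain R) :
    ∀ e ∈ l.consecutivePairs, R e.1 e.2 := by
  induction l using twoStepInduction with
  | nil => simp
  | singleton => simp
  | cons_cons a b l _ ih =>
    rw [isChain_cons_cons] at h
    simp only [consecutivePairs_cons_cons, mem_cons, forall_eq_or_imp]
    exact ⟨h.1, ih b h.2⟩

theorem exists_eq_append_cons_append_cons_of_not_nodup {l : List V} (h : ¬l.Nodup) :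
    ∃ (u : V) (l₁ l₂ l₃ : List V), l = l₁ ++ u :: l₂ ++ u :: l₃ := by
  induction l with
  | nil => simp at h
  | cons x t ih =>
    by_cases hx : x ∈ t
    · obtain ⟨l₂, l₃, rfl⟩ := append_of_mem hx
      exact ⟨x, [], l₂, l₃, rfl⟩
    · obtain ⟨u, l₁, l₂, l₃, rfl⟩ := ih (by simpa [hx] using h)
      exact ⟨u, x :: l₁, l₂, l₃, rfl⟩

end List

open List Finset

theorem exists_isDiCycle_flatMap_perm_of_closed_walk {R : V → V → Prop} (v : V) (l : List V)
    (hR : l.IsChain R) (hhead : l.head? = some v) (hlast : l.getLast? = some v) :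
    ∃ L : List (List V), (∀ c ∈ L, IsDiCycle R c) ∧ L.flatMap cycleEdges ~ l.consecutivePairs := by
  induction hn : l.length using Nat.strong_induction_on generalizing l v with
  | _ n ih =>
    obtain ⟨m, rfl⟩ := getLast?_eq_some_iff.1 hlast
    by_cases hm : m.Nodup
    · cases m with
      | nil => exact ⟨[], by simp, by simp⟩
      | cons w m =>
        obtain rfl : w = v := by simpa using hhead
        refine ⟨[w :: m], ?_, by rw [flatMap_singleton, consecutivePairs_cons_append_singleton]⟩
        simp only [List.mem_singleton, forall_eq]
        refine ⟨cons_ne_nil _ _, hm, ?_⟩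
        rw [← consecutivePairs_cons_append_singleton]
        exact hR.rel_of_mem_consecutivePairs
    · obtain ⟨u, l₁, l₂, l₃, rfl⟩ := exists_eq_append_cons_append_cons_of_not_nodup hm
      -- Recurse on the loop `u :: l₂ ++ [u]` and on the walk with that loop cut out.
      have hsplit : (l₁ ++ u :: l₂ ++ u :: l₃ ++ [v]).consecutivePairs =
          (l₁ ++ [u]).consecutivePairs ++ (u :: l₂ ++ [u]).consecutivePairs ++
            (u :: (l₃ ++ [v])).consecutivePairs := by
        rw [append_assoc _ (u :: l₃), cons_append, consecutivePairs_append_cons, append_assoc,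
          cons_append, consecutivePairs_append_cons l₁]
      have hR₁ : (u :: l₂ ++ [u]).IsChain R := hR.infix ⟨l₁, l₃ ++ [v], by simp⟩
      have hR₂ : (l₁ ++ u :: (l₃ ++ [v])).IsChain R := by
        have hA : (l₁ ++ [u]).IsChain R := hR.infix ⟨[], l₂ ++ u :: l₃ ++ [v], by simp⟩
        have hC : ([u] ++ (l₃ ++ [v])).IsChain R := hR.infix ⟨l₁ ++ u :: l₂, [], by simp⟩
        simpa using hA.append_overlap hC (cons_ne_nil _ _)
      obtain ⟨L₁, hL₁, hperm₁⟩ := ih _ (by simp at hn ⊢; omega) u _ hR₁ rfl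
        (getLast?_eq_some_iff.2 ⟨_, rfl⟩) rfl
      obtain ⟨L₂, hL₂, hperm₂⟩ := ih _ (by simp at hn ⊢; omega) v _ hR₂ (by simpa using hhead)
        (getLast?_eq_some_iff.2 ⟨l₁ ++ u :: l₃, by simp⟩) rfl
      refine ⟨L₁ ++ L₂, fun c hc => (mem_append.1 hc).elim (hL₁ c) (hL₂ c), ?_⟩
      rw [flatMap_append, hsplit]
      refine (hperm₁.append hperm₂).trans ?_
      rw [consecutivePairs_append_cons l₁ (l₃ ++ [v]) u, perm_iff_count]
      intro e
      simp only [count_append]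
      omega

theorem card_filter_mem_cycleEdges {L : List (List V)} (hL : ∀ c ∈ L, c.Nodup) (e : V × V) :
    #{i : Fin L.length | e ∈ cycleEdges L[i]} = (L.flatMap cycleEdges).count e := by
  rw [Finset.card_filter]
  simp only [Fin.getElem_fin]
  rw [Fin.sum_univ_fun_getElem L fun c => if e ∈ cycleEdges c then 1 else 0, count_flatMap]
  congr 1
  refine map_congr_left fun c hc => ?_
  simp [(hL c hc).cycleEdges.count]

theorem exists_closed_walk_count_consecutivePairs {R : V → V → Prop} {x y : V}
    {P Q : Finset (V × V)} (hP : IsDiPathSet R x y P) (hQ : IsDiPathSet R y x Q) :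
    ∃ w : List V, w.IsChain R ∧ w.head? = some x ∧ w.getLast? = some x ∧
      ∀ e, w.consecutivePairs.count e = (if e ∈ P then 1 else 0) + (if e ∈ Q then 1 else 0) := by
  obtain ⟨p, hp, hpR, hpx, hpy, rfl⟩ := hP
  obtain ⟨q, hq, hqR, hqy, hqx, rfl⟩ := hQ
  obtain ⟨p, rfl⟩ := getLast?_eq_some_iff.1 hpy
  obtain ⟨q, rfl⟩ := head?_eq_some_iff.1 hqy
  refine ⟨p ++ y :: q, ?_, by simpa using hpx, by simpa using hqx, fun e => ?_⟩
  · simpa using IsChain.append_overlap hpR (l₃ := q) hqR (cons_ne_nil _ _)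
  · rw [consecutivePairs_append_cons, count_append, hp.consecutivePairs.count,
      hq.consecutivePairs.count]
    simp only [mem_toFinset]

theorem stmt2_general (R : V → V → Prop) (x y : V) (P Q : Finset (V × V))
    (hP : IsDiPathSet R x y P) (hQ : IsDiPathSet R y x Q) :
    ∃ (k : ℕ) (C : Fin k → Finset (V × V)),
      (∀ i, IsDiCycleSet R (C i)) ∧
      (∀ e : V × V,
        Odd ((Finset.univ.filter fun i : Fin k => e ∈ C i).card) ↔
          e ∈ (P \ Q) ∪ (Q \ P)) ∧
      Finset.univ.biUnion C = P ∪ Q := by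
  obtain ⟨w, hR, hhead, hlast, hcount⟩ := exists_closed_walk_count_consecutivePairs hP hQ
  obtain ⟨L, hL, hperm⟩ := exists_isDiCycle_flatMap_perm_of_closed_walk x w hR hhead hlast
  have hcard (e : V × V) : #{i : Fin L.length | e ∈ cycleEdges L[i]} =
      (if e ∈ P then 1 else 0) + (if e ∈ Q then 1 else 0) := by
    rw [card_filter_mem_cycleEdges (fun c hc => (hL c hc).2.1), hperm.count_eq, hcount]
  refine ⟨L.length, fun i => (cycleEdges L[i]).toFinset,
    fun i => (hL _ (getElem_mem _)).isDiCycleSet, fun e => ?_, ?_⟩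
  · simp only [mem_toFinset, hcard]
    by_cases hPe : e ∈ P <;> by_cases hQe : e ∈ Q <;> simp [hPe, hQe]
  · ext e
    have hpos : 0 < #{i : Fin L.length | e ∈ cycleEdges L[i]} ↔ e ∈ P ∪ Q := by
      rw [hcard]
      by_cases hPe : e ∈ P <;> by_cases hQe : e ∈ Q <;> simp [hPe, hQe]
    simpa [Finset.card_pos, Finset.filter_nonempty_iff] using hpos

/-- If `P` is the edge set of a directed path from `x` to `y` and `Q`
is the edge set of a directed path from `y` to `x`, then there are directed cycles
`C 0, …, C (k-1)` whose mod-2 sum is the symmetric difference of `P` and `Q` and whose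
union is `P ∪ Q`. -/
theorem stmt2 [Fintype V] (R : V → V → Prop) (x y : V) (P Q : Finset (V × V))
    (hP : IsDiPathSet R x y P) (hQ : IsDiPathSet R y x Q) :
    ∃ (k : ℕ) (C : Fin k → Finset (V × V)),
      (∀ i, IsDiCycleSet R (C i)) ∧
      (∀ e : V × V,
        Odd ((Finset.univ.filter fun i : Fin k => e ∈ C i).card) ↔
          e ∈ (P \ Q) ∪ (Q \ P)) ∧
      Finset.univ.biUnion C = P ∪ Q :=
  stmt2_general R x y P Q hP hQ
end

section
/- Let G be a directed graph drawn with a fixed orientation assignment, and let 𝒞 be a finite family of cycles, each of even length, whose mod-2 sum (symmetric difference of edge sets) is empty. Then the parity of the number of clockwise-even members of 𝒞 is unchanged when the orientation of any single edge of G is reversed; hence this parity is independent of the orientation of G. -/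
open scoped Classical

open Finset

private lemma even_iff_zmod' (n : ℕ) : Even n ↔ (n : ZMod 2) = 0 := by
  rw [even_iff_two_dvd, ← ZMod.natCast_eq_zero_iff]

private lemma odd_cast_zmod' (n : ℕ) (h : ¬ Even n) : (n : ZMod 2) = 1 := by
  rw [← ZMod.natCast_mod, (Nat.odd_iff).mp (Nat.not_even_iff_odd.mp h)]
  norm_num

/-- Total agreement count mod 2 is orientation-independent. -/
private lemma Fsum_eq {E : Type*} [Fintype E] (m : ℕ) (C : Fin m → Finset E)
    (ref : Fin m → E → Bool)
    (hsum : ∀ e : E, Even ((Finset.univ.filter fun i => e ∈ C i).card))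
    (o₁ o₂ : E → Bool) :
    (∑ i : Fin m, ∑ e ∈ C i, (if o₁ e = ref i e then (1:ZMod 2) else 0)) =
    ∑ i : Fin m, ∑ e ∈ C i, (if o₂ e = ref i e then (1:ZMod 2) else 0) := by
  have key : (∑ i : Fin m, ∑ e ∈ C i, (if o₁ e = ref i e then (1:ZMod 2) else 0)) +
      (∑ i : Fin m, ∑ e ∈ C i, (if o₂ e = ref i e then (1:ZMod 2) else 0)) = 0 := by
    rw [← Finset.sum_add_distrib]
    have h1 : ∀ i : Fin m,
        ((∑ e ∈ C i, (if o₁ e = ref i e then (1:ZMod 2) else 0)) +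
         (∑ e ∈ C i, (if o₂ e = ref i e then (1:ZMod 2) else 0))) =
        ∑ e : E, (if e ∈ C i then (if o₁ e = o₂ e then (0:ZMod 2) else 1) else 0) := by
      intro i
      rw [← Finset.sum_add_distrib]
      rw [Finset.sum_ite_mem, Finset.univ_inter]
      refine Finset.sum_congr rfl fun e _ => ?_
      cases h1 : o₁ e <;> cases h2 : o₂ e <;> cases h3 : ref i e <;>
        simp [h1, h2, h3] <;> decide
    rw [Finset.sum_congr rfl fun i _ => h1 i, Finset.sum_comm]
    refine Finset.sum_eq_zero fun e _ => ?_
    rw [← Finset.sum_filter, Finset.sum_const]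
    have he := (even_iff_zmod' _).mp (hsum e)
    rw [nsmul_eq_mul, he, zero_mul]
  have h2 := eq_neg_of_add_eq_zero_left key
  simpa [CharTwo.neg_eq] using h2

private lemma bridge {E : Type*} [Fintype E] (m : ℕ) (C : Fin m → Finset E)
    (ref : Fin m → E → Bool) (o : E → Bool) :
    Even ((Finset.univ.filter fun i =>
        Even (((C i).filter fun e => o e = ref i e).card)).card) ↔
      (m : ZMod 2) + (∑ i : Fin m, ∑ e ∈ C i,
        (if o e = ref i e then (1:ZMod 2) else 0)) = 0 := by
  rw [even_iff_zmod', Finset.card_filter, Nat.cast_sum]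
  have h1 : ∀ i : Fin m,
      (((if Even (((C i).filter fun e => o e = ref i e).card) then 1 else 0 : ℕ)) : ZMod 2) =
      1 + ∑ e ∈ C i, (if o e = ref i e then (1:ZMod 2) else 0) := by
    intro i
    have hc : ((((C i).filter fun e => o e = ref i e).card : ℕ) : ZMod 2) =
        ∑ e ∈ C i, (if o e = ref i e then (1:ZMod 2) else 0) := by
      rw [Finset.card_filter, Nat.cast_sum]
      exact Finset.sum_congr rfl fun e _ => by split <;> simp
    by_cases h : Even (((C i).filter fun e => o e = ref i e).card)
    · rw [if_pos h, ← hc, (even_iff_zmod' _).mp h]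
      norm_num
    · rw [if_neg h, ← hc, odd_cast_zmod' _ h]
      decide
  rw [Finset.sum_congr rfl fun i _ => h1 i, Finset.sum_add_distrib, Finset.sum_const,
    Finset.card_univ, Fintype.card_fin, nsmul_eq_mul, mul_one]

/-- Let `C 0, …, C (m-1)` be cycles of even length (given as edge sets
over an abstract edge type `E`, each cycle `C i` carrying a reference direction
`ref i : E → Bool` recording the traversal sense of its edges) whose mod-2 sum is empty,
i.e. every edge lies in an even number of the cycles.  For an orientation `o : E → Bool`,
cycle `C i` is clockwise even when the number of its edges whose orientation agrees with
the traversal sense is even.  Then the parity of the number of clockwise-even members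
is unchanged when a single edge `e₀` is reversed; hence it is independent of the
orientation. -/
theorem stmt3 {E : Type*} [Fintype E] (m : ℕ) (C : Fin m → Finset E)
    (ref : Fin m → E → Bool)
    (heven : ∀ i, Even (C i).card)
    (hsum : ∀ e : E, Even ((Finset.univ.filter fun i => e ∈ C i).card)) :
    (∀ (o : E → Bool) (e₀ : E),
      (Even ((Finset.univ.filter fun i =>
          Even (((C i).filter fun e => o e = ref i e).card)).card) ↔
        Even ((Finset.univ.filter fun i =>
          Even (((C i).filter fun e => (if e = e₀ then !o e else o e) = ref i e).card)).card)))
    ∧ ∀ o₁ o₂ : E → Bool,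
      (Even ((Finset.univ.filter fun i =>
          Even (((C i).filter fun e => o₁ e = ref i e).card)).card) ↔
        Even ((Finset.univ.filter fun i =>
          Even (((C i).filter fun e => o₂ e = ref i e).card)).card)) := by
  have main : ∀ o₁ o₂ : E → Bool,
      (Even ((Finset.univ.filter fun i =>
          Even (((C i).filter fun e => o₁ e = ref i e).card)).card) ↔
        Even ((Finset.univ.filter fun i =>
          Even (((C i).filter fun e => o₂ e = ref i e).card)).card)) := by
    intro o₁ o₂
    rw [bridge m C ref o₁, bridge m C ref o₂, Fsum_eq m C ref hsum o₁ o₂]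
  exact ⟨fun o e₀ => main o (fun e => if e = e₀ then !o e else o e), main⟩
end

section
/- The graph Γ₁ (12 vertices a,...,l with edges forming the 12-cycle a b c d e f g h i j k l a together with the chords {a,d}, {b,g}, {c,i}, {e,j}, {h,k}, {f,l}) is not Pfaffian. -/
open scoped Classical

noncomputable instance {α : Type*} (G : SimpleGraph α) : DecidableRel G.Adj :=
  fun _ _ => Classical.propDecidable _

variable {V : Type*}

/-- `m` is a perfect matching of `G`: a fixed-point-free involution matching each
vertex to an adjacent vertex. -/
def IsPerfMatching (G : SimpleGraph V) (m : Equiv.Perm V) : Prop :=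
  (∀ v, m v ≠ v) ∧ (∀ v, m (m v) = v) ∧ ∀ v, G.Adj v (m v)

/-- The sign of a list enumerating all elements of `V` exactly once, relative to the
enumeration sorted by the linear order `r` (junk value `1` for other lists). -/
noncomputable def enumSign [Fintype V] (r : LinearOrder V) (l : List V) : ℤ :=
  letI := r
  if h : l.Nodup ∧ ∀ x, x ∈ l then
    let l₀ := (Finset.univ : Finset V).sort (· ≤ ·)
    let e₀ : Fin l₀.length ≃ V :=
      List.Nodup.getEquivOfForallMemList l₀ (Finset.sort_nodup _ _)
        (fun x => (Finset.mem_sort _).2 (Finset.mem_univ x))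
    let e : Fin l.length ≃ V := List.Nodup.getEquivOfForallMemList l h.1 h.2
    have hlen : l₀.length = l.length := by
      simp only [l₀, Finset.length_sort]
      have h2 : l.toFinset = Finset.univ :=
        Finset.eq_univ_iff_forall.2 fun x => List.mem_toFinset.2 (h.2 x)
      rw [← h2, List.toFinset_card_of_nodup h.1]
    Equiv.Perm.sign (e₀.symm.trans ((finCongr hlen).trans e))
  else 1

/-- The listing `u₁ w₁ u₂ w₂ …` of the edges of the perfect matching `m`, each edge
written according to the orientation `σ` (pairs ordered by their `r`-smaller vertex). -/
noncomputable def matchingList [Fintype V] (r : LinearOrder V) (σ : V → V → ℤ)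
    (m : Equiv.Perm V) : List V :=
  letI := r
  ((Finset.univ.filter fun v : V => v < m v).sort (· ≤ ·)).flatMap fun v =>
    if σ v (m v) = 1 then [v, m v] else [m v, v]

/-- The sign of a perfect matching under the orientation `σ`. -/
noncomputable def matchingSign [Fintype V] (r : LinearOrder V) (σ : V → V → ℤ)
    (m : Equiv.Perm V) : ℤ :=
  enumSign r (matchingList r σ m)

/-- `G` is Pfaffian: some orientation `σ` (a skew sign function, `±1` on edges) gives
all perfect matchings the same sign. -/
def IsPfaffian [Fintype V] (G : SimpleGraph V) : Prop :=
  ∃ σ : V → V → ℤ, (∀ u v, G.Adj u v → σ u v = 1 ∨ σ u v = -1) ∧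
    (∀ u v, σ u v = -σ v u) ∧
    ∀ (r : LinearOrder V) (m₁ m₂ : Equiv.Perm V),
      IsPerfMatching G m₁ → IsPerfMatching G m₂ →
        matchingSign r σ m₁ = matchingSign r σ m₂

/-- `G` is non-Pfaffian, but deleting any edge yields a Pfaffian graph. -/
def MinimalNonPfaffian [Fintype V] (G : SimpleGraph V) : Prop :=
  ¬ IsPfaffian G ∧ ∀ e ∈ G.edgeSet, IsPfaffian (G.deleteEdges {e})

/-- The graph obtained from `G` by contracting the vertex set `S` to a single vertex
(the `Sum.inr` vertex), deleting loops and parallel edges. -/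
def contractSet (G : SimpleGraph V) (S : Set V) :
    SimpleGraph ({x : V // x ∉ S} ⊕ Unit) where
  Adj a b :=
    match a, b with
    | Sum.inl a, Sum.inl b => G.Adj a.1 b.1
    | Sum.inl a, Sum.inr _ => ∃ s ∈ S, G.Adj a.1 s
    | Sum.inr _, Sum.inl b => ∃ s ∈ S, G.Adj s b.1
    | Sum.inr _, Sum.inr _ => False
  symm := by
    constructor
    rintro (a | a) (b | b) h
    · exact h.symm
    · obtain ⟨s, hs, ha⟩ := h; exact ⟨s, hs, ha.symm⟩
    · obtain ⟨s, hs, ha⟩ := h; exact ⟨s, hs, ha.symm⟩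
    · exact h.elim
  loopless := by
    constructor
    rintro (a | a) h
    · exact G.irrefl h
    · exact h

/-- The graph `Γ₁`: the 12-cycle `a b c d e f g h i j k l` (vertices `0,…,11`)
together with the chords `{a,d}, {b,g}, {c,i}, {e,j}, {h,k}, {f,l}`. -/
def Gamma1 : SimpleGraph (Fin 12) :=
  SimpleGraph.fromEdgeSet
    {s(0, 1), s(1, 2), s(2, 3), s(3, 4), s(4, 5), s(5, 6), s(6, 7), s(7, 8), s(8, 9),
      s(9, 10), s(10, 11), s(11, 0),
      s(0, 3), s(1, 6), s(2, 8), s(4, 9), s(7, 10), s(5, 11)}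

/-! The sign of a perfect matching `M` under an orientation `σ` factors as `(∏_{e ∈ M} ε e) · s(M)`,
where `ε e = ±1` records whether `σ` orients the edge `e` from its smaller end, and `s(M)` is the
sign of the listing of `M` with every edge written from its smaller end: reversing one pair of a
listing is a transposition. Γ₁ has six perfect matchings covering every edge exactly twice, so the
product of their six signs is `∏ ε e ^ 2 · ∏ s(M) = ∏ s(M) = -1` for every orientation. If all six
signs were equal, this product would be a sixth power, hence nonnegative. -/

open Equiv

abbrev IsEnumeration (l : List V) : Prop := l.Nodup ∧ ∀ x, x ∈ l

lemma IsEnumeration.map {l : List V} (hl : IsEnumeration l) (τ : Perm V) :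
    IsEnumeration (l.map τ) :=
  ⟨hl.1.map τ.injective, fun x => List.mem_map.2 ⟨τ.symm x, hl.2 _, τ.apply_symm_apply x⟩⟩

lemma IsEnumeration.perm {l l' : List V} (hl : IsEnumeration l) (h : l.Perm l') :
    IsEnumeration l' :=
  ⟨h.nodup_iff.1 hl.1, fun x => h.mem_iff.1 (hl.2 x)⟩

lemma IsEnumeration.length_eq [Fintype V] {l : List V} (hl : IsEnumeration l) :
    l.length = Fintype.card V := by
  rw [← List.toFinset_card_of_nodup hl.1,
    Finset.eq_univ_of_forall fun x => List.mem_toFinset.2 (hl.2 x), Finset.card_univ]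

def flattenPairs (ps : List (V × V)) : List V := ps.flatMap fun e => [e.1, e.2]

def orientPair (σ : V → V → ℤ) (e : V × V) : List V :=
  if σ e.1 e.2 = 1 then [e.1, e.2] else [e.2, e.1]

def orientSign (σ : V → V → ℤ) (e : V × V) : ℤ := if σ e.1 e.2 = 1 then 1 else -1

lemma orientPair_perm (σ : V → V → ℤ) (e : V × V) : (orientPair σ e).Perm [e.1, e.2] := by
  unfold orientPair
  split_ifs
  · rfl
  · exact List.Perm.swap _ _ _

lemma prod_map_orientSign_append_self (σ : V → V → ℤ) (ps : List (V × V)) :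
    ((ps ++ ps).map (orientSign σ)).prod = 1 := by
  have hsq (e : V × V) : orientSign σ e * orientSign σ e = 1 := by
    unfold orientSign; split_ifs <;> norm_num
  rw [List.map_append, List.prod_append, ← List.prod_map_mul]
  simp [hsq]

section Fintype

variable [Fintype V]

lemma enumSign_map (r : LinearOrder V) {l : List V} (hl : IsEnumeration l) (τ : Perm V) :
    enumSign r (l.map τ) = Perm.sign τ * enumSign r l := by
  unfold enumSign
  rw [dif_pos (show l.Nodup ∧ _ from hl), dif_pos (show (l.map τ).Nodup ∧ _ from hl.map τ),
    ← Units.val_mul, ← map_mul]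
  dsimp only
  congr 2
  ext v
  simp [List.getElem_map]

lemma enumSign_swap_adjacent (r : LinearOrder V) {A B : List V} {x y : V}
    (h : IsEnumeration (A ++ x :: y :: B)) :
    enumSign r (A ++ y :: x :: B) = -enumSign r (A ++ x :: y :: B) := by
  have hnd := h.1
  simp only [List.nodup_append, List.nodup_cons, List.mem_cons, not_or] at hnd
  have hxy : x ≠ y := hnd.2.1.1.1
  have hfix : ∀ z ∈ A ++ B, swap x y z = z := fun z hz =>
    swap_apply_of_ne_of_ne (by rintro rfl; grind) (by rintro rfl; grind)
  have hmap : (A ++ x :: y :: B).map (swap x y) = A ++ y :: x :: B := by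
    simp only [List.map_append, List.map_cons, swap_apply_left, swap_apply_right]
    rw [List.map_congr_left fun z hz => hfix z (List.mem_append_left _ hz),
      List.map_congr_left fun z hz => hfix z (List.mem_append_right _ hz), List.map_id',
      List.map_id']
  rw [← hmap, enumSign_map r h, Perm.sign_swap hxy]
  simp

lemma enumSign_orientPair (r : LinearOrder V) (σ : V → V → ℤ) {A B : List V} (e : V × V)
    (h : IsEnumeration (A ++ e.1 :: e.2 :: B)) :
    enumSign r (A ++ orientPair σ e ++ B) = orientSign σ e * enumSign r (A ++ e.1 :: e.2 :: B) := by
  unfold orientPair orientSign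
  split_ifs
  · simp
  · simpa using enumSign_swap_adjacent r h

lemma enumSign_append_flatMap_orientPair (r : LinearOrder V) (σ : V → V → ℤ)
    (ps : List (V × V)) {A : List V} (hA : IsEnumeration (A ++ flattenPairs ps)) :
    enumSign r (A ++ ps.flatMap (orientPair σ)) =
      (ps.map (orientSign σ)).prod * enumSign r (A ++ flattenPairs ps) := by
  induction ps generalizing A with
  | nil => simp [flattenPairs]
  | cons e ps ih =>
    have hA' : IsEnumeration (A ++ e.1 :: e.2 :: flattenPairs ps) := by
      simpa [flattenPairs] using hA
    have hA'' : IsEnumeration (A ++ orientPair σ e ++ flattenPairs ps) :=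
      hA'.perm (by simpa using (((orientPair_perm σ e).append_right _).append_left A).symm)
    calc enumSign r (A ++ (e :: ps).flatMap (orientPair σ))
        = enumSign r ((A ++ orientPair σ e) ++ ps.flatMap (orientPair σ)) := by simp
      _ = (ps.map (orientSign σ)).prod * enumSign r (A ++ orientPair σ e ++ flattenPairs ps) :=
          ih hA''
      _ = ((e :: ps).map (orientSign σ)).prod * enumSign r (A ++ flattenPairs (e :: ps)) := by
          rw [enumSign_orientPair r σ e hA']
          simp only [flattenPairs, List.flatMap_cons, List.map_cons, List.prod_cons,
            List.cons_append, List.nil_append]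
          ring

variable [LinearOrder V]

def matchingEdges (m : Perm V) : List (V × V) :=
  ((Finset.univ.filter fun v => v < m v).sort (· ≤ ·)).map fun v => (v, m v)

lemma matchingSign_eq (σ : V → V → ℤ) {m : Perm V}
    (hm : IsEnumeration (flattenPairs (matchingEdges m))) :
    matchingSign inferInstance σ m =
      ((matchingEdges m).map (orientSign σ)).prod *
        enumSign inferInstance (flattenPairs (matchingEdges m)) := by
  have hlist : matchingList inferInstance σ m = (matchingEdges m).flatMap (orientPair σ) := by
    rw [matchingList, matchingEdges, List.flatMap_map]
    rfl
  simpa [matchingSign, hlist] using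
    enumSign_append_flatMap_orientPair inferInstance σ (matchingEdges m) (A := []) hm

end Fintype

lemma matchingEdges_fin {n : ℕ} (m : Perm (Fin n)) :
    matchingEdges m = ((List.finRange n).filter fun v => v < m v).map fun v => (v, m v) := by
  rw [matchingEdges]
  congr 1
  refine (Finset.sortedLT_sort _).eq_of_mem_iff ?_ (by simp)
  exact ((List.sortedLT_finRange n).pairwise.filter _).sortedLT

lemma enumSign_fin {n : ℕ} {l : List (Fin n)} (hl : IsEnumeration l) :
    enumSign inferInstance l =
      Perm.sign ((finCongr (hl.length_eq.trans (Fintype.card_fin n)).symm).trans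
        (hl.1.getEquivOfForallMemList l hl.2)) := by
  rw [enumSign, dif_pos (show l.Nodup ∧ _ from hl)]
  dsimp only
  congr 2
  ext x
  simp [Fin.sort_univ]

def gamma1Edges : List (Fin 12 × Fin 12) :=
  [(0, 1), (1, 2), (2, 3), (3, 4), (4, 5), (5, 6), (6, 7), (7, 8), (8, 9), (9, 10), (10, 11),
    (0, 11), (0, 3), (1, 6), (2, 8), (4, 9), (7, 10), (5, 11)]

-- Under the default size limit, instance search for this 36-fold disjunction fails and
-- silently falls back to `Classical.propDecidable`, which `decide` cannot evaluate.
set_option synthInstance.maxSize 2000 in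
lemma gamma1_adj_iff (u v : Fin 12) :
    Gamma1.Adj u v ↔ (u, v) ∈ gamma1Edges ∨ (v, u) ∈ gamma1Edges := by
  simp only [Gamma1, SimpleGraph.fromEdgeSet_adj, Set.mem_insert_iff, Set.mem_singleton_iff,
    Sym2.eq_iff]
  revert u v
  decide

def gamma1MatchingFun : Fin 6 → Fin 12 → Fin 12 :=
  ![![11, 2, 1, 4, 3, 6, 5, 8, 7, 10, 9, 0],
    ![3, 2, 1, 0, 5, 4, 7, 6, 9, 8, 11, 10],
    ![3, 6, 8, 0, 9, 11, 1, 10, 2, 4, 7, 5],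
    ![11, 6, 3, 2, 5, 4, 1, 10, 9, 8, 7, 0],
    ![1, 0, 3, 2, 9, 6, 5, 8, 7, 4, 11, 10],
    ![1, 0, 8, 4, 3, 11, 7, 6, 2, 10, 9, 5]]

lemma gamma1MatchingFun_involutive (i : Fin 6) : Function.Involutive (gamma1MatchingFun i) := by
  unfold Function.Involutive
  decide +revert

def gamma1Matching (i : Fin 6) : Perm (Fin 12) :=
  (gamma1MatchingFun_involutive i).toPerm

lemma isPerfMatching_gamma1Matching (i : Fin 6) : IsPerfMatching Gamma1 (gamma1Matching i) := by
  refine ⟨?_, gamma1MatchingFun_involutive i, fun v => (gamma1_adj_iff _ _).2 ?_⟩ <;>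
    decide +revert

lemma isEnumeration_gamma1Matching (i : Fin 6) :
    IsEnumeration (flattenPairs (((List.finRange 12).filter fun v => v < gamma1Matching i v).map
      fun v => (v, gamma1Matching i v))) := by
  decide +revert

lemma gamma1Matching_edges_perm :
    ((List.finRange 6).flatMap fun i => matchingEdges (gamma1Matching i)).Perm
      (gamma1Edges ++ gamma1Edges) := by
  simp only [matchingEdges_fin]
  decide

lemma prod_enumSign_gamma1Matching :
    ∏ i, enumSign inferInstance (flattenPairs (matchingEdges (gamma1Matching i))) = -1 := by
  simp only [matchingEdges_fin]
  rw [Finset.prod_congr rfl fun i _ => enumSign_fin (isEnumeration_gamma1Matching i)]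
  decide

lemma prod_matchingSign_gamma1Matching (σ : Fin 12 → Fin 12 → ℤ) :
    ∏ i, matchingSign inferInstance σ (gamma1Matching i) = -1 := by
  have hsign (i : Fin 6) := matchingSign_eq σ (m := gamma1Matching i)
    (by rw [matchingEdges_fin]; exact isEnumeration_gamma1Matching i)
  have hedges : ∏ i, ((matchingEdges (gamma1Matching i)).map (orientSign σ)).prod = 1 := by
    rw [Fin.prod_univ_def, ← prod_map_orientSign_append_self σ gamma1Edges,
      ← (gamma1Matching_edges_perm.map _).prod_eq, List.map_flatMap, List.flatMap_def,
      List.prod_flatten, List.map_map]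
    rfl
  rw [Finset.prod_congr rfl fun i _ => hsign i, Finset.prod_mul_distrib, hedges,
    prod_enumSign_gamma1Matching, one_mul]

/-- The graph `Γ₁` is not Pfaffian. -/
theorem stmt11 : ¬ IsPfaffian Gamma1 := by
  rintro ⟨σ, -, -, hall⟩
  have hconst (i : Fin 6) : matchingSign inferInstance σ (gamma1Matching i) =
      matchingSign inferInstance σ (gamma1Matching 0) :=
    hall _ _ _ (isPerfMatching_gamma1Matching i) (isPerfMatching_gamma1Matching 0)
  have hprod := prod_matchingSign_gamma1Matching σ
  simp only [hconst, Finset.prod_const, Finset.card_univ, Fintype.card_fin] at hprod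
  have := Even.pow_nonneg (by decide : Even 6) (matchingSign inferInstance σ (gamma1Matching 0))
  linarith
end

section
/- Let G be a 1-extendible graph which is bipartite after deletion of two edges e₁ and e₂ (i.e., G − {e₁, e₂} is bipartite) and such that G itself is not bipartite. Then G − {e₁} is not bipartite, G − {e₂} is not bipartite, and every even cycle of G containing e₁ also contains e₂ and vice versa; in particular, every alternating cycle (with respect to any perfect matching) containing one of e₁, e₂ contains both. -/
open scoped Classical

variable {V : Type*}

/-- The set of edges of the perfect matching `m`. -/
def matchEdges (m : Equiv.Perm V) : Set (Sym2 V) := {e | ∃ v, e = s(v, m v)}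

/-- `G` is 1-extendible: every edge lies in some perfect matching. -/
def OneExtendible (G : SimpleGraph V) : Prop :=
  ∀ ⦃u v : V⦄, G.Adj u v → ∃ m : Equiv.Perm V, IsPerfMatching G m ∧ m u = v

/-- `G` is bipartite. -/
def IsBipartite (G : SimpleGraph V) : Prop :=
  ∃ M : Set V, ∀ ⦃u v : V⦄, G.Adj u v → (u ∈ M ↔ v ∉ M)

/-- The reference orientation of the bipartite graph `K` with respect to the side `M`
and the perfect matching `f`: matching edges are directed from `M` to its complement,
all other edges the other way. -/
def refOrient (K : SimpleGraph V) (M : Set V) (f : Equiv.Perm V) : V → V → Prop :=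
  fun u v => K.Adj u v ∧ ((u ∈ M ∧ f u = v) ∨ (u ∉ M ∧ f u ≠ v))

/-- The walk `p` is directed with respect to the orientation `D`. -/
def DirWalk (D : V → V → Prop) {G : SimpleGraph V} {u v : V} (p : G.Walk u v) : Prop :=
  ∀ d ∈ p.darts, D d.toProd.1 d.toProd.2

/-- The path `p` is `f`-alternating: every internal vertex is incident with an edge of
`p ∩ f`. -/
def AltPath (f : Equiv.Perm V) {G : SimpleGraph V} {u v : V} (p : G.Walk u v) : Prop :=
  ∀ w ∈ p.support, w ≠ u → w ≠ v → s(w, f w) ∈ p.edges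

/-- The cycle `c` is `f`-alternating: its edges alternate between `f` and its
complement; equivalently, the matching edge of every vertex of `c` lies on `c`. -/
def AlternatingCycle (f : Equiv.Perm V) {G : SimpleGraph V} {v : V} (c : G.Walk v v) :
    Prop :=
  ∀ w ∈ c.support, s(w, f w) ∈ c.edges

/-- The walk `p` is clockwise even with respect to the orientation `O`: the number of
its darts agreeing with `O` is even. -/
def CWEven (O : V → V → Bool) {G : SimpleGraph V} {u v : V} (p : G.Walk u v) : Prop :=
  Even (p.darts.countP fun d => O d.toProd.1 d.toProd.2)

/-!
If `G - e₁` were bipartite, `e₁` would lie inside one colour class (as `G` is not bipartite),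
so a perfect matching of `G` through `e₁` would make that class two vertices larger than the
other, whereas a perfect matching of `G - {e₁, e₂}` (which has an edge, as `G` is not
bipartite) makes the two classes equally large.

Hence in a 2-colouring of `G - {e₁, e₂}` both `e₁` and `e₂` lie inside a colour class while
every other edge changes colour, so the length of a closed walk has the parity of the number of
its passages through `e₁` and `e₂`; an even cycle therefore contains both or neither.
-/

def IsBipartiteSide (G : SimpleGraph V) (M : Set V) : Prop :=
  ∀ ⦃u v : V⦄, G.Adj u v → (u ∈ M ↔ v ∉ M)

namespace IsBipartiteSide

variable {G : SimpleGraph V} {M : Set V}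

lemma compl (hM : IsBipartiteSide G M) : IsBipartiteSide G Mᶜ := fun _ _ huv => by
  have := hM huv
  simp only [Set.mem_compl_iff]
  tauto

lemma of_deleteEdges_singleton {a b : V} (hM : IsBipartiteSide (G.deleteEdges {s(a, b)}) M)
    (hab : a ∈ M ↔ b ∉ M) : IsBipartiteSide G M := by
  intro u v huv
  by_cases h : s(u, v) = s(a, b)
  · rcases Sym2.eq_iff.mp h with ⟨rfl, rfl⟩ | ⟨rfl, rfl⟩ <;> tauto
  · exact hM (SimpleGraph.deleteEdges_adj.mpr ⟨huv, h⟩)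

/-- A perfect matching pairs each vertex of `M` with one of `Mᶜ`. -/
lemma ncard_eq_ncard_compl [Finite V] {g : Equiv.Perm V} (hM : IsBipartiteSide G M)
    (hg : IsPerfMatching G g) : M.ncard = Mᶜ.ncard := by
  rw [← Set.ncard_image_of_injective M g.injective, Equiv.image_eq_preimage_symm]
  congr 1
  ext w
  simpa using hM (hg.2.2 (g.symm w))

lemma iff_of_not_isBipartite {e : Sym2 V} (hM : IsBipartiteSide (G.deleteEdges {e}) M)
    (hG : ¬ IsBipartite G) {u v : V} (he : s(u, v) = e) : u ∈ M ↔ v ∈ M := by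
  subst he
  by_contra h
  exact hG ⟨M, hM.of_deleteEdges_singleton (by tauto)⟩

end IsBipartiteSide

lemma IsPerfMatching.mono {G K : SimpleGraph V} {m : Equiv.Perm V} (hGK : G ≤ K)
    (hm : IsPerfMatching G m) : IsPerfMatching K m :=
  ⟨hm.1, hm.2.1, fun v => hGK (hm.2.2 v)⟩

lemma OneExtendible.exists_isPerfMatching {G : SimpleGraph V} (h1e : OneExtendible G)
    (hG : G.edgeSet.Nonempty) : ∃ m, IsPerfMatching G m := by
  obtain ⟨e, he⟩ := hG
  induction e using Sym2.ind with
  | _ u v => exact (h1e he).imp fun _ hm => hm.1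

lemma isBipartite_of_colorable_two {G : SimpleGraph V} (hG : G.Colorable 2) : IsBipartite G := by
  obtain ⟨C⟩ := hG
  refine ⟨{v | C v = 0}, fun u v huv => ?_⟩
  have hne := C.valid huv
  simp only [Set.mem_ofPred_eq]
  generalize C u = x, C v = y at hne
  fin_cases x <;> fin_cases y <;> simp_all

/-- A non-bipartite graph contains a cycle, which has at least three distinct edges. -/
lemma edgeSet_deleteEdges_pair_nonempty {G : SimpleGraph V} (hG : ¬ IsBipartite G)
    (e₁ e₂ : Sym2 V) : (G.deleteEdges {e₁, e₂}).edgeSet.Nonempty := by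
  have hcyc : ¬ G.IsAcyclic := fun h => hG (isBipartite_of_colorable_two h.colorable_two)
  simp only [SimpleGraph.IsAcyclic, not_forall, not_not] at hcyc
  obtain ⟨v, c, hc⟩ := hcyc
  by_contra! h
  have hsub : c.edges.toFinset ⊆ {e₁, e₂} := fun e he => by
    by_contra hS
    refine h.subset (?_ : e ∈ (G.deleteEdges {e₁, e₂}).edgeSet)
    rw [SimpleGraph.edgeSet_deleteEdges]
    exact ⟨c.edges_subset_edgeSet (List.mem_toFinset.mp he), by simpa using hS⟩
  have hcard := (Finset.card_le_card hsub).trans Finset.card_le_two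
  rw [List.toFinset_card_of_nodup hc.edges_nodup, c.length_edges] at hcard
  have := hc.three_le_length
  omega

/-- A perfect matching through an edge inside `M` pairs `Mᶜ` with `M` minus that edge. -/
lemma ncard_compl_add_two_le [Finite V] {M : Set V} {f : Equiv.Perm V} {a b : V} (hab : a ≠ b)
    (ha : a ∈ M) (hb : b ∈ M) (hfa : f a = b) (hfb : f b = a) (hf : ∀ v ∉ M, f v ∈ M) :
    Mᶜ.ncard + 2 ≤ M.ncard := by
  have hsub : ({a, b} : Set V) ⊆ M := Set.insert_subset ha (Set.singleton_subset_iff.mpr hb)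
  have hmaps : ∀ v ∈ Mᶜ, f v ∈ M \ {a, b} := by
    intro v hv
    refine ⟨hf v hv, ?_⟩
    rintro (h | h)
    · exact hv (f.injective (h.trans hfb.symm) ▸ hb)
    · exact hv (f.injective (h.trans hfa.symm) ▸ ha)
  have hle := Set.ncard_le_ncard_of_injOn f hmaps f.injective.injOn
  have hsplit := Set.ncard_sdiff_add_ncard_of_subset hsub
  rw [Set.ncard_pair hab] at hsplit
  omega

theorem not_isBipartite_deleteEdges_singleton [Finite V] {G : SimpleGraph V}
    (h1e : OneExtendible G) (hG : ¬ IsBipartite G) {e : Sym2 V} (he : e ∈ G.edgeSet)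
    {g : Equiv.Perm V} (hg : IsPerfMatching (G.deleteEdges {e}) g) :
    ¬ IsBipartite (G.deleteEdges {e}) := by
  rintro ⟨M, hM : IsBipartiteSide _ M⟩
  induction e using Sym2.ind with
  | _ a b =>
  obtain ⟨f, hf, hfa⟩ := h1e (show G.Adj a b from he)
  have hfb : f b = a := by rw [← hfa, hf.2.1]
  have hab : a ∈ M ↔ b ∈ M := hM.iff_of_not_isBipartite hG rfl
  obtain ⟨N, hN, ha, hb⟩ : ∃ N, IsBipartiteSide (G.deleteEdges {s(a, b)}) N ∧ a ∈ N ∧ b ∈ N := by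
    by_cases ha : a ∈ M
    · exact ⟨M, hM, ha, hab.mp ha⟩
    · exact ⟨Mᶜ, hM.compl, ha, mt hab.mpr ha⟩
  have hf_cross : ∀ v ∉ N, f v ∈ N := by
    intro v hv
    have hva : v ≠ a := fun h => hv (h ▸ ha)
    have hvb : v ≠ b := fun h => hv (h ▸ hb)
    have hadj : (G.deleteEdges {s(a, b)}).Adj v (f v) := by
      refine SimpleGraph.deleteEdges_adj.mpr ⟨hf.2.2 v, ?_⟩
      simp [hva, hvb]
    exact of_not_not fun hfv => hv ((hN hadj).mpr hfv)
  have := ncard_compl_add_two_le (G.ne_of_adj he) ha hb hfa hfb hf_cross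
  have := hN.ncard_eq_ncard_compl hg
  omega

/-- Edges outside `S` change the side of `M`, edges in `S` keep it. -/
lemma SimpleGraph.Walk.even_length_add_countP_iff {G : SimpleGraph V} {M : Set V}
    {S : Set (Sym2 V)} (hM : IsBipartiteSide (G.deleteEdges S) M)
    (hS : ∀ ⦃u v : V⦄, s(u, v) ∈ S → (u ∈ M ↔ v ∈ M)) {u v : V} (p : G.Walk u v) :
    Even (p.length + p.edges.countP (· ∈ S)) ↔ (u ∈ M ↔ v ∈ M) := by
  induction p with
  | nil => simp
  | @cons u w v huw p ih =>
    simp only [length_cons, edges_cons, List.countP_cons]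
    by_cases huwS : s(u, w) ∈ S
    · have := hS huwS
      rw [if_pos (decide_eq_true huwS), show p.length + 1 + (p.edges.countP (· ∈ S) + 1)
          = p.length + p.edges.countP (· ∈ S) + 1 + 1 by omega, Nat.even_add_one,
        Nat.even_add_one, ih]
      tauto
    · have := hM (SimpleGraph.deleteEdges_adj.mpr ⟨huw, huwS⟩)
      rw [if_neg (by simpa using huwS), show p.length + 1 + (p.edges.countP (· ∈ S) + 0)
          = p.length + p.edges.countP (· ∈ S) + 1 by omega, Nat.even_add_one, ih]
      tauto

lemma List.Nodup.even_countP_mem_pair_iff {α : Type*} {l : List α} (hl : l.Nodup) {a b : α}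
    (hab : a ≠ b) : Even (l.countP (· ∈ ({a, b} : Set α))) ↔ (a ∈ l ↔ b ∈ l) := by
  induction l with
  | nil => simp
  | cons x l ih =>
    rw [List.nodup_cons] at hl
    rw [List.countP_cons, List.mem_cons, List.mem_cons]
    by_cases hx : x ∈ ({a, b} : Set α)
    · rw [if_pos (decide_eq_true hx), Nat.even_add_one, ih hl.2]
      rcases hx with rfl | rfl
      · tauto
      · have : a ≠ x := hab
        tauto
    · rw [if_neg (by simpa using hx), add_zero, ih hl.2]
      have hxa : a ≠ x := fun h => hx (Or.inl h.symm)
      have hxb : b ≠ x := fun h => hx (Or.inr h.symm)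
      tauto

theorem stmt13_general [Fintype V] (G : SimpleGraph V)
    (h1e : OneExtendible G) (e₁ e₂ : Sym2 V)
    (he₁ : e₁ ∈ G.edgeSet) (he₂ : e₂ ∈ G.edgeSet) (hne : e₁ ≠ e₂)
    (hbip : IsBipartite (G.deleteEdges {e₁, e₂}))
    (hH1e : OneExtendible (G.deleteEdges {e₁, e₂}))
    (hnb : ¬ IsBipartite G) :
    ¬ IsBipartite (G.deleteEdges {e₁}) ∧ ¬ IsBipartite (G.deleteEdges {e₂}) ∧
    ∀ (v : V) (c : G.Walk v v), c.IsCycle → Even c.length →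
      (e₁ ∈ c.edges ↔ e₂ ∈ c.edges) := by
  obtain ⟨g, hg⟩ :=
    OneExtendible.exists_isPerfMatching hH1e (edgeSet_deleteEdges_pair_nonempty hnb e₁ e₂)
  have hnb₁ : ¬ IsBipartite (G.deleteEdges {e₁}) :=
    not_isBipartite_deleteEdges_singleton h1e hnb he₁
      (hg.mono (SimpleGraph.deleteEdges_anti (by simp)))
  have hnb₂ : ¬ IsBipartite (G.deleteEdges {e₂}) :=
    not_isBipartite_deleteEdges_singleton h1e hnb he₂
      (hg.mono (SimpleGraph.deleteEdges_anti (by simp)))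
  refine ⟨hnb₁, hnb₂, fun v c hc heven => ?_⟩
  obtain ⟨M, hM⟩ := hbip
  have hM₁ : IsBipartiteSide ((G.deleteEdges {e₂}).deleteEdges {e₁}) M := by
    rwa [SimpleGraph.deleteEdges_deleteEdges, Set.singleton_union, Set.pair_comm]
  have hM₂ : IsBipartiteSide ((G.deleteEdges {e₁}).deleteEdges {e₂}) M := by
    rwa [SimpleGraph.deleteEdges_deleteEdges, Set.singleton_union]
  have hS : ∀ ⦃u w : V⦄, s(u, w) ∈ ({e₁, e₂} : Set (Sym2 V)) → (u ∈ M ↔ w ∈ M) := by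
    rintro u w (h | h)
    · exact hM₁.iff_of_not_isBipartite hnb₂ h
    · exact hM₂.iff_of_not_isBipartite hnb₁ h
  have hcount := (Nat.even_add.mp ((c.even_length_add_countP_iff hM hS).mpr Iff.rfl)).mp heven
  exact (hc.edges_nodup.even_countP_mem_pair_iff hne).mp (by convert hcount)

/-- Let `G` be a connected 1-extendible non-bipartite graph with
edges `e₁ ≠ e₂` such that `G − {e₁, e₂}` is bipartite and 1-extendible.  Then neither
`G − {e₁}` nor `G − {e₂}` is bipartite, and every even cycle of `G` containing one of
`e₁, e₂` contains the other. -/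
theorem stmt13 [Fintype V] (G : SimpleGraph V) (hconn : G.Connected)
    (h1e : OneExtendible G) (e₁ e₂ : Sym2 V)
    (he₁ : e₁ ∈ G.edgeSet) (he₂ : e₂ ∈ G.edgeSet) (hne : e₁ ≠ e₂)
    (hbip : IsBipartite (G.deleteEdges {e₁, e₂}))
    (hH1e : OneExtendible (G.deleteEdges {e₁, e₂}))
    (hnb : ¬ IsBipartite G) :
    ¬ IsBipartite (G.deleteEdges {e₁}) ∧ ¬ IsBipartite (G.deleteEdges {e₂}) ∧
    ∀ (v : V) (c : G.Walk v v), c.IsCycle → Even c.length →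
      (e₁ ∈ c.edges ↔ e₂ ∈ c.edges) :=
  stmt13_general G h1e e₁ e₂ he₁ he₂ hne hbip hH1e hnb
end

section
/- Let H be a bipartite graph with bipartition {M, N}, perfect matching f, and reference orientation (f-edges from M to N, others from N to M). Let Q be a directed path in a graph G ⊇ H from a vertex y to a vertex x which is minimal in the sense that for every edge e ∈ Q − (A ∪ B) there is no directed path from y to x contained in (A ∪ B ∪ Q) − {e}, where A ∪ B is a fixed edge set. Suppose that through every pair of vertices of A ∪ B there is at most one directed path contained in A ∪ B. Then for every directed path P contained in A ∪ B and every pair of distinct maximal subpaths Q₁, Q₂ of Q ∩ P: Q₁ precedes Q₂ along Q if and only if Q₂ precedes Q₁ along P. -/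
variable {V : Type*}

/-- A directed path in the digraph `D`: `len + 1` distinct vertices `vert 0, …,
`vert len`, consecutive ones joined by an edge of `D` (values of `vert` beyond `len`
are irrelevant). -/
structure DiPath (D : V → V → Prop) where
  len : ℕ
  vert : ℕ → V
  inj : ∀ i ≤ len, ∀ j ≤ len, vert i = vert j → i = j
  adj : ∀ i < len, D (vert i) (vert (i + 1))

/-- The set of (directed) edges of a directed path. -/
def DiPath.edges {D : V → V → Prop} (p : DiPath D) : Set (V × V) :=
  {e | ∃ i < p.len, e = (p.vert i, p.vert (i + 1))}

/-- Subpath of a directed path. -/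
def DiPath.sub {D : V → V → Prop} (p : DiPath D) (a b : ℕ) (hab : a ≤ b) (hb : b ≤ p.len) :
    DiPath D where
  len := b - a
  vert := fun k => p.vert (a + k)
  inj := fun i hi j hj h => by
    have := p.inj (a + i) (by omega) (a + j) (by omega) h; omega
  adj := fun i hi => by
    have := p.adj (a + i) (by omega)
    rwa [Nat.add_assoc] at this

lemma DiPath.sub_edges {D : V → V → Prop} (p : DiPath D) (a b : ℕ) (hab : a ≤ b)
    (hb : b ≤ p.len) :
    (p.sub a b hab hb).edges = {e | ∃ k, a ≤ k ∧ k < b ∧ e = (p.vert k, p.vert (k + 1))} := by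
  ext e
  constructor
  · rintro ⟨i, hi, rfl⟩
    have hi' : i < b - a := hi
    refine ⟨a + i, by omega, by omega, ?_⟩
    show (p.vert (a + i), p.vert (a + (i + 1))) = (p.vert (a + i), p.vert (a + i + 1))
    rw [← Nat.add_assoc]
  · rintro ⟨k, hk1, hk2, rfl⟩
    refine ⟨k - a, show k - a < b - a by omega, ?_⟩
    show (p.vert k, p.vert (k+1)) = (p.vert (a + (k - a)), p.vert (a + (k - a) + 1))
    congr 2 <;> omega

lemma exists_diPath_of_walk (D : V → V → Prop) (S : Set (V × V)) :
    ∀ n (f : ℕ → V), (∀ i < n, D (f i) (f (i + 1))) → (∀ i < n, (f i, f (i + 1)) ∈ S) →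
    ∃ R : DiPath D, R.vert 0 = f 0 ∧ R.vert R.len = f n ∧ R.edges ⊆ S := by
  intro n
  induction n using Nat.strong_induction_on with
  | _ n ih =>
    intro f hadj hS
    by_cases hinj : ∀ i ≤ n, ∀ j ≤ n, f i = f j → i = j
    · exact ⟨⟨n, f, hinj, hadj⟩, rfl, rfl, fun e ⟨i, hi, he⟩ => he ▸ hS i hi⟩
    · push_neg at hinj
      obtain ⟨i0, hi0, j0, hj0, hfij, hne⟩ := hinj
      set i := min i0 j0 with hidef
      set j := max i0 j0 with hjdef
      have hij : i < j := by omega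
      have hjn : j ≤ n := by omega
      have hfij' : f i = f j := by
        rcases le_total i0 j0 with h | h
        · rw [hidef, hjdef, min_eq_left h, max_eq_right h]; exact hfij
        · rw [hidef, hjdef, min_eq_right h, max_eq_left h]; exact hfij.symm
      set d := j - i with hd
      set g : ℕ → V := fun m => if m ≤ i then f m else f (m + d) with hg
      have key : ∀ m < n - d, ∃ l < n, g m = f l ∧ g (m + 1) = f (l + 1) := by
        intro m hm
        by_cases h1 : m + 1 ≤ i
        · refine ⟨m, by omega, ?_, ?_⟩
          · simp only [hg]; rw [if_pos (show m ≤ i by omega)]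
          · simp only [hg]; rw [if_pos h1]
        · by_cases h2 : m ≤ i
          · have hmi : m = i := by omega
            refine ⟨j, by omega, ?_, ?_⟩
            · simp only [hg]; rw [if_pos h2, hmi, hfij']
            · simp only [hg]; rw [if_neg h1]
              congr 1; omega
          · refine ⟨m + d, by omega, ?_, ?_⟩
            · simp only [hg]; rw [if_neg h2]
            · simp only [hg]; rw [if_neg (show ¬ m + 1 ≤ i by omega)]
              congr 1; omega
      obtain ⟨R, hR0, hRn, hRS⟩ := ih (n - d) (by omega) g
        (fun m hm => by obtain ⟨l, hl, e1, e2⟩ := key m hm; rw [e1, e2]; exact hadj l hl)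
        (fun m hm => by obtain ⟨l, hl, e1, e2⟩ := key m hm; rw [e1, e2]; exact hS l hl)
      refine ⟨R, ?_, ?_, hRS⟩
      · rw [hR0]; simp only [hg]; rw [if_pos (Nat.zero_le i)]
      · rw [hRn]
        by_cases h : n - d ≤ i
        · have h1 : n - d = i := by omega
          have h2 : n = j := by omega
          simp only [hg]; rw [if_pos h, h1, hfij', h2]
        · simp only [hg]; rw [if_neg h]
          congr 1; omega

lemma DiPath.sub_len {D : V → V → Prop} (p : DiPath D) (a b : ℕ) (hab : a ≤ b)
    (hb : b ≤ p.len) : (p.sub a b hab hb).len = b - a := rfl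

lemma DiPath.sub_vert {D : V → V → Prop} (p : DiPath D) (a b : ℕ) (hab : a ≤ b)
    (hb : b ≤ p.len) (k : ℕ) : (p.sub a b hab hb).vert k = p.vert (a + k) := rfl

/-- The indices `i ≤ j` delimit a `QP`-arc: a maximal nonempty run of consecutive edges
of `Q` all belonging to `P`. -/
def IsQPArc {D : V → V → Prop} (Q P : DiPath D) (i j : ℕ) : Prop :=
  i ≤ j ∧ j < Q.len ∧
  (∀ t, i ≤ t → t ≤ j → (Q.vert t, Q.vert (t + 1)) ∈ P.edges) ∧
  (i = 0 ∨ (Q.vert (i - 1), Q.vert i) ∉ P.edges) ∧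
  (j + 1 = Q.len ∨ (Q.vert (j + 1), Q.vert (j + 2)) ∉ P.edges)

/-- Two overlapping QP-arcs coincide. -/
lemma arc_eq_of_overlap {D : V → V → Prop} (Q P : DiPath D) {i₁ j₁ i₂ j₂ : ℕ}
    (h₁ : IsQPArc Q P i₁ j₁) (h₂ : IsQPArc Q P i₂ j₂) (h : i₂ ≤ j₁) (h' : i₁ ≤ j₂) :
    i₁ = i₂ ∧ j₁ = j₂ := by
  obtain ⟨h₁ij, h₁j, h₁in, h₁l, h₁r⟩ := h₁
  obtain ⟨h₂ij, h₂j, h₂in, h₂l, h₂r⟩ := h₂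
  have left : ∀ a₁ b₁ a₂ b₂ : ℕ, a₁ ≤ b₁ → a₂ ≤ b₂ →
      (∀ t, a₁ ≤ t → t ≤ b₁ → (Q.vert t, Q.vert (t + 1)) ∈ P.edges) →
      (a₂ = 0 ∨ (Q.vert (a₂ - 1), Q.vert a₂) ∉ P.edges) → a₂ ≤ b₁ → ¬ (a₁ < a₂) := by
    intro a₁ b₁ a₂ b₂ hab1 hab2 hin hl hle hlt
    have h0 : a₂ ≠ 0 := by omega
    rcases hl with h | h
    · exact h0 h
    · have := hin (a₂ - 1) (by omega) (by omega)
      rw [show a₂ - 1 + 1 = a₂ by omega] at this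
      exact h this
  have right : ∀ a₁ b₁ a₂ b₂ : ℕ, a₁ ≤ b₁ → a₂ ≤ b₂ → b₂ < Q.len →
      (∀ t, a₂ ≤ t → t ≤ b₂ → (Q.vert t, Q.vert (t + 1)) ∈ P.edges) →
      (b₁ + 1 = Q.len ∨ (Q.vert (b₁ + 1), Q.vert (b₁ + 2)) ∉ P.edges) → a₂ ≤ b₁ →
      ¬ (b₁ < b₂) := by
    intro a₁ b₁ a₂ b₂ hab1 hab2 hblen hin hr hle hlt
    rcases hr with h | h
    · omega
    · exact h (hin (b₁ + 1) (by omega) (by omega))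
  have e1 := left i₁ j₁ i₂ j₂ h₁ij h₂ij h₁in h₂l h
  have e2 := left i₂ j₂ i₁ j₁ h₂ij h₁ij h₂in h₁l h'
  have e3 := right i₁ j₁ i₂ j₂ h₁ij h₂ij h₂j h₂in h₁r h
  have e4 := right i₂ j₂ i₁ j₁ h₂ij h₁ij h₁j h₁in h₂r h'
  omega

lemma key (D : V → V → Prop) (E : Set (V × V)) (y x : V) (Q : DiPath D)
    (hQ0 : Q.vert 0 = y) (hQl : Q.vert Q.len = x)
    (huniq : ∀ (u v : V) (P₁ P₂ : DiPath D), P₁.vert 0 = u → P₁.vert P₁.len = v →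
      P₂.vert 0 = u → P₂.vert P₂.len = v → P₁.edges ⊆ E → P₂.edges ⊆ E →
      P₁.edges = P₂.edges)
    (hmin : ∀ e ∈ Q.edges \ E, ¬ ∃ R : DiPath D, R.vert 0 = y ∧ R.vert R.len = x ∧
      R.edges ⊆ (E ∪ Q.edges) \ {e})
    (P : DiPath D) (hP : P.edges ⊆ E)
    (i₁ j₁ i₂ j₂ : ℕ) (h₁ : IsQPArc Q P i₁ j₁) (h₂ : IsQPArc Q P i₂ j₂)
    (hlt : j₁ < i₂) :
    ∀ s t : ℕ, s < P.len → t < P.len →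
      (∃ t', i₂ ≤ t' ∧ t' ≤ j₂ ∧
        (P.vert s, P.vert (s + 1)) = (Q.vert t', Q.vert (t' + 1))) →
      (∃ t', i₁ ≤ t' ∧ t' ≤ j₁ ∧
        (P.vert t, P.vert (t + 1)) = (Q.vert t', Q.vert (t' + 1))) →
      s < t := by
  obtain ⟨h₁ij, h₁j, h₁in, h₁l, h₁r⟩ := h₁
  obtain ⟨h₂ij, h₂j, h₂in, h₂l, h₂r⟩ := h₂
  -- the edge after Q₁'s last edge is not in P, and j₁ + 2 ≤ i₂
  have hnotP : (Q.vert (j₁ + 1), Q.vert (j₁ + 2)) ∉ P.edges := by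
    rcases h₁r with h | h
    · omega
    · exact h
  have hsep : j₁ + 2 ≤ i₂ := by
    rcases Nat.lt_or_ge (j₁ + 1) i₂ with h | h
    · omega
    · exfalso
      apply hnotP
      rw [show j₁ + 1 = i₂ by omega, show j₁ + 2 = i₂ + 1 by omega]
      exact h₂in i₂ le_rfl h₂ij
  intro s t hs ht ⟨t₂', h2a, h2b, he2⟩ ⟨t₁', h1a, h1b, he1⟩
  rw [Prod.mk.injEq] at he2 he1
  obtain ⟨he2a, he2b⟩ := he2
  obtain ⟨he1a, he1b⟩ := he1
  have ht₂ : t₂' < Q.len := by omega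
  have ht₁ : t₁' < Q.len := by omega
  by_contra hst
  have hts : t ≤ s := Nat.le_of_not_lt hst
  -- s ≠ t
  have hne1 : t ≠ s := by
    intro h
    have := Q.inj t₁' (by omega) t₂' (by omega) (by rw [← he1a, ← he2a, h])
    omega
  -- s ≠ t + 1
  have hne2 : t + 1 ≠ s := by
    intro h
    have := Q.inj (t₁' + 1) (by omega) t₂' (by omega) (by rw [← he1b, ← he2a, h])
    omega
  have hts2 : t + 2 ≤ s := by omega
  by_cases hall : ∀ k, t₁' + 1 ≤ k → k < t₂' → (Q.vert k, Q.vert (k + 1)) ∈ E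
  · -- unique-path case
    set Qs := Q.sub (t₁' + 1) t₂' (by omega) (by omega) with hQs
    set Ps := P.sub (t + 1) s (by omega) (by omega) with hPs
    have hEq : Qs.edges = Ps.edges := by
      apply huniq (Q.vert (t₁' + 1)) (Q.vert t₂')
      · rw [hQs, DiPath.sub_vert]
      · rw [hQs, DiPath.sub_vert, DiPath.sub_len]
        congr 1; omega
      · rw [hPs, DiPath.sub_vert]; rw [← he1b]
      · rw [hPs, DiPath.sub_vert, DiPath.sub_len, ← he2a]
        congr 1; omega
      · rw [hQs, DiPath.sub_edges]
        rintro e ⟨k, hk1, hk2, rfl⟩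
        exact hall k hk1 hk2
      · rw [hPs, DiPath.sub_edges]
        rintro e ⟨k, hk1, hk2, rfl⟩
        exact hP ⟨k, by omega, rfl⟩
    have hmem : (Q.vert (j₁ + 1), Q.vert (j₁ + 2)) ∈ Qs.edges := by
      rw [hQs, DiPath.sub_edges]
      exact ⟨j₁ + 1, by omega, by omega, rfl⟩
    rw [hEq, hPs, DiPath.sub_edges] at hmem
    obtain ⟨k, hk1, hk2, hk3⟩ := hmem
    exact hnotP (hk3 ▸ ⟨k, by omega, rfl⟩)
  · -- minimality case
    push_neg at hall
    obtain ⟨k, hk1, hk2, hkE⟩ := hall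
    set e : V × V := (Q.vert k, Q.vert (k + 1)) with he
    apply hmin e ⟨⟨k, by omega, rfl⟩, hkE⟩
    set a := t₁' + 1 with ha
    set b := s - (t + 1) with hb
    set c := Q.len - t₂' with hc
    have hb1 : 1 ≤ b := by omega
    have hc1 : 1 ≤ c := by omega
    set g : ℕ → V := fun m =>
      if m ≤ a then Q.vert m
      else if m ≤ a + b then P.vert (t + 1 + (m - a))
      else Q.vert (t₂' + (m - a - b)) with hg
    have hwalk : ∀ m < a + b + c,
        D (g m) (g (m + 1)) ∧ (g m, g (m + 1)) ∈ (E ∪ Q.edges) \ {e} := by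
      intro m hm
      rcases Nat.lt_or_ge m a with h1 | h1
      · have e1 : g m = Q.vert m := by simp only [hg]; rw [if_pos (by omega)]
        have e2 : g (m + 1) = Q.vert (m + 1) := by simp only [hg]; rw [if_pos (by omega)]
        rw [e1, e2]
        refine ⟨Q.adj m (by omega), Or.inr ⟨m, by omega, rfl⟩, ?_⟩
        simp only [Set.mem_singleton_iff, he, Prod.mk.injEq, not_and]
        intro hv
        have := Q.inj m (by omega) k (by omega) hv
        omega
      · rcases Nat.lt_or_ge m (a + b) with h2 | h2
        · have e1 : g m = P.vert (t + 1 + (m - a)) := by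
            rcases Nat.eq_or_lt_of_le h1 with h | h
            · simp only [hg]; rw [if_pos (by omega)]
              rw [show t + 1 + (m - a) = t + 1 by omega, he1b, ← h, ha]
            · simp only [hg]; rw [if_neg (by omega), if_pos (by omega)]
          have e2 : g (m + 1) = P.vert (t + 1 + (m - a) + 1) := by
            simp only [hg]; rw [if_neg (by omega), if_pos (by omega)]
            congr 1; omega
          rw [e1, e2]
          have hidx : t + 1 + (m - a) < P.len := by omega
          refine ⟨P.adj _ hidx, Or.inl (hP ⟨_, hidx, rfl⟩), ?_⟩
          simp only [Set.mem_singleton_iff]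
          intro hcontra
          exact hkE (hcontra ▸ hP ⟨_, hidx, rfl⟩)
        · have e1 : g m = Q.vert (t₂' + (m - a - b)) := by
            rcases Nat.eq_or_lt_of_le h2 with h | h
            · simp only [hg]; rw [if_neg (by omega), if_pos (by omega)]
              rw [show t + 1 + (m - a) = s by omega, he2a]
              congr 1; omega
            · simp only [hg]; rw [if_neg (by omega), if_neg (by omega)]
          have e2 : g (m + 1) = Q.vert (t₂' + (m - a - b) + 1) := by
            simp only [hg]; rw [if_neg (by omega), if_neg (by omega)]
            congr 1; omega
          rw [e1, e2]
          have hidx : t₂' + (m - a - b) < Q.len := by omega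
          refine ⟨Q.adj _ hidx, Or.inr ⟨_, hidx, rfl⟩, ?_⟩
          simp only [Set.mem_singleton_iff, he, Prod.mk.injEq, not_and]
          intro hv
          have := Q.inj (t₂' + (m - a - b)) (by omega) k (by omega) hv
          omega
    obtain ⟨R, hR0, hRn, hRS⟩ := exists_diPath_of_walk D ((E ∪ Q.edges) \ {e})
      (a + b + c) g (fun m hm => (hwalk m hm).1) (fun m hm => (hwalk m hm).2)
    refine ⟨R, ?_, ?_, hRS⟩
    · rw [hR0]; simp only [hg]; rw [if_pos (Nat.zero_le a)]; rw [hQ0]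
    · rw [hRn]; simp only [hg]
      rw [if_neg (by omega), if_neg (by omega)]
      rw [show t₂' + (a + b + c - a - b) = Q.len by omega, hQl]

/-- Let `Q` be a directed path from `y` to `x` that is minimal with
respect to the edge set `E` (for every edge `e` of `Q` outside `E` there is no directed
path from `y` to `x` inside `(E ∪ Q) − {e}`), and suppose directed paths inside `E`
between given endpoints are unique (have the same edges).  Then for every directed path
`P` with edges in `E` and every pair of distinct `QP`-arcs `Q₁ = (i₁, j₁)`,
`Q₂ = (i₂, j₂)`: `Q₁` precedes `Q₂` along `Q` iff `Q₂` precedes `Q₁` along `P`. -/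
theorem stmt19 (D : V → V → Prop) (E : Set (V × V)) (y x : V)
    (Q : DiPath D) (hQ0 : Q.vert 0 = y) (hQl : Q.vert Q.len = x)
    (huniq : ∀ (u v : V) (P₁ P₂ : DiPath D), P₁.vert 0 = u → P₁.vert P₁.len = v →
      P₂.vert 0 = u → P₂.vert P₂.len = v → P₁.edges ⊆ E → P₂.edges ⊆ E →
      P₁.edges = P₂.edges)
    (hmin : ∀ e ∈ Q.edges \ E, ¬ ∃ R : DiPath D, R.vert 0 = y ∧ R.vert R.len = x ∧
      R.edges ⊆ (E ∪ Q.edges) \ {e}) :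
    ∀ P : DiPath D, P.edges ⊆ E →
      ∀ i₁ j₁ i₂ j₂ : ℕ, IsQPArc Q P i₁ j₁ → IsQPArc Q P i₂ j₂ →
        (i₁, j₁) ≠ (i₂, j₂) →
        (j₁ < i₂ ↔
          ∀ s t : ℕ, s < P.len → t < P.len →
            (∃ t', i₂ ≤ t' ∧ t' ≤ j₂ ∧
              (P.vert s, P.vert (s + 1)) = (Q.vert t', Q.vert (t' + 1))) →
            (∃ t', i₁ ≤ t' ∧ t' ≤ j₁ ∧
              (P.vert t, P.vert (t + 1)) = (Q.vert t', Q.vert (t' + 1))) →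
            s < t) := by
  intro P hP i₁ j₁ i₂ j₂ h₁ h₂ hne
  constructor
  · intro hlt
    exact key D E y x Q hQ0 hQl huniq hmin P hP i₁ j₁ i₂ j₂ h₁ h₂ hlt
  · intro H
    by_contra hlt
    have hsep : j₂ < i₁ := by
      by_contra hsep'
      obtain ⟨e1, e2⟩ := arc_eq_of_overlap Q P h₁ h₂ (by omega) (by omega)
      exact hne (by rw [e1, e2])
    -- pick a concrete edge of each arc on P
    obtain ⟨s₁, hs₁, hes₁⟩ := h₁.2.2.1 i₁ le_rfl h₁.1
    obtain ⟨s₂, hs₂, hes₂⟩ := h₂.2.2.1 i₂ le_rfl h₂.1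
    have hA := H s₂ s₁ hs₂ hs₁ ⟨i₂, le_rfl, h₂.1, hes₂.symm⟩ ⟨i₁, le_rfl, h₁.1, hes₁.symm⟩
    have hB := key D E y x Q hQ0 hQl huniq hmin P hP i₂ j₂ i₁ j₁ h₂ h₁ hsep
      s₁ s₂ hs₁ hs₂ ⟨i₁, le_rfl, h₁.1, hes₁.symm⟩ ⟨i₂, le_rfl, h₂.1, hes₂.symm⟩
    omega
end
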